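/- For all real α, β, γ, the squared modulus of the (2,1) entry of U(α,β,γ) satisfies |⟨2|U(α,β,γ)|1⟩|² = (1/2)·sin²β. Consequently, the supremum over all Euler angles of the transition probability from state |1⟩ to state |2⟩ under a single spin-1 unitary evolution equals 1/2, attained at β = π/2; i.e., the maximal transition probability |1⟩ → |2⟩ achievable by coherent control alone (kinematically) is 1/2. -/
import Mathlib

open Matrix

/-- The Wigner matrix `U(α,β,γ)` of the spin-1 `ZYZ` Euler parameterization. -/
noncomputable def Umat (α β γ : ℝ) : Matrix (Fin 3) (Fin 3) ℂ :=
  !![Complex.exp (-Complex.I * (↑α + ↑γ)) * (Real.cos (β/2) : ℂ)^2,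
       -(Complex.exp (-Complex.I * ↑α) / (Real.sqrt 2 : ℂ)) * (Real.sin β : ℂ),
       Complex.exp (-Complex.I * (↑α - ↑γ)) * (Real.sin (β/2) : ℂ)^2;
     (Complex.exp (-Complex.I * ↑γ) / (Real.sqrt 2 : ℂ)) * (Real.sin β : ℂ),
       (Real.cos β : ℂ),
       -(Complex.exp (Complex.I * ↑γ) / (Real.sqrt 2 : ℂ)) * (Real.sin β : ℂ);
     Complex.exp (Complex.I * (↑α - ↑γ)) * (Real.sin (β/2) : ℂ)^2,
       (Complex.exp (Complex.I * ↑α) / (Real.sqrt 2 : ℂ)) * (Real.sin β : ℂ),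
       Complex.exp (Complex.I * (↑α + ↑γ)) * (Real.cos (β/2) : ℂ)^2]

lemma key (α β γ : ℝ) : Complex.normSq (Umat α β γ 1 0) = (1/2) * Real.sin β ^ 2 := by
  have h : Umat α β γ 1 0 = (Complex.exp (-Complex.I * ↑γ) / (Real.sqrt 2 : ℂ)) * (Real.sin β : ℂ) := by
    simp [Umat]
  rw [h, Complex.normSq_mul, Complex.normSq_div]
  have he : Complex.normSq (Complex.exp (-Complex.I * ↑γ)) = 1 := by
    rw [← Complex.sq_norm]
    have : -Complex.I * ↑γ = (↑(-γ) : ℝ) * Complex.I := by push_cast; ring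
    rw [this, Complex.norm_exp_ofReal_mul_I]; norm_num
  rw [he, Complex.normSq_ofReal, Complex.normSq_ofReal,
    Real.mul_self_sqrt (by norm_num : (2:ℝ) ≥ 0)]
  ring

open Real in
/-- `|⟨2|U(α,β,γ)|1⟩|² = (1/2)·sin²β` for all real Euler angles,
and the supremum over all Euler angles of this single-unitary transition
probability `|1⟩ → |2⟩` equals `1/2`, attained at `β = π/2`.
(0-based indices: the (2,1) entry is `Umat α β γ 1 0`.) -/
theorem stmt17 :
    (∀ α β γ : ℝ, Complex.normSq (Umat α β γ 1 0) = (1/2) * Real.sin β ^ 2)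
    ∧ IsGreatest {x : ℝ | ∃ α β γ : ℝ, x = Complex.normSq (Umat α β γ 1 0)} (1/2)
    ∧ (∀ α γ : ℝ, Complex.normSq (Umat α (π/2) γ 1 0) = 1/2) := by
  refine ⟨key, ⟨⟨0, π/2, 0, ?_⟩, ?_⟩, fun α γ => ?_⟩
  · rw [key]; simp
  · rintro x ⟨α, β, γ, rfl⟩
    rw [key]
    nlinarith [Real.sin_sq_le_one β]
  · rw [key]; simp
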